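/- Let G ⊂ ℝⁿ (n ≥ 1) be a convex body in which a ball of some radius r > 0 rolls freely. Then there exists a constant C > 1 such that for all nonempty compact convex subsets K, L of G, (1/C)·d_H(K,L)^((n+1)/2) ≤ ρ_G(K,L) ≤ C·d_H(K,L). -/

import Mathlib

/-!
Write `d = d_H(K, L)` and `K ∪̃ L` for the closed convex hull.

Upper bound: `G` contains a ball `closedBall x ε`, so the convex set `A = G + K` contains a ball of
radius `ε`, whence `A + closedBall 0 d` lies in a translate of `(1 + d / ε) • A`. As `K ∪̃ L` lies
in the `d`-thickening `K + closedBall 0 d`, `Vol(G + K ∪̃ L) - Vol(G + K)` is at most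
`((1 + d / ε)^n - 1) Vol(G + K) = O(d)`, and symmetrically for `L`.

Lower bound: some point `p`, say of `L`, lies at distance at least `d` from `K`, so a unit vector
`u` separates `p` from `K` with margin `d`. Take a ball of radius `r` rolling in `G` at a point of
`G` maximising `⟪u, ·⟫`. Its translate by `p` lies in `G + K ∪̃ L`, and its cap of height
`m = min d r` in direction `u` misses `G + K`. That cap contains a box of volume
`(m / 2) (√(r m / n))^(n - 1) ≍ m^((n + 1) / 2)`.
-/

open MeasureTheory Metric Pointwise

/-- `ρ_G(K,L) := 2·Vol(G + K ∪̃ L) − Vol(G + K) − Vol(G + L)`. -/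
noncomputable def rhoDist {n : ℕ} (G K L : Set (EuclideanSpace ℝ (Fin n))) : ℝ :=
  2 * (volume (G + closure (convexHull ℝ (K ∪ L)))).toReal
    - (volume (G + K)).toReal - (volume (G + L)).toReal

open Module Bornology
open scoped RealInnerProductSpace

section ParallelBody

variable {E : Type*} [NormedAddCommGroup E]

theorem closedBall_add_subset_add {G K : Set E} {x k : E} {ε : ℝ} (hball : closedBall x ε ⊆ G)
    (hk : k ∈ K) : closedBall (x + k) ε ⊆ G + K := fun y hy =>
  ⟨y - k, hball (by rwa [mem_closedBall, dist_sub_eq_dist_add_left]), k, hk, sub_add_cancel y k⟩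

variable [NormedSpace ℝ E]

theorem IsCompact.closure_convexHull [ProperSpace E] {s : Set E} (hs : IsCompact s) :
    IsCompact (closure (convexHull ℝ s)) :=
  isCompact_of_isClosed_isBounded isClosed_closure (isBounded_convexHull.2 hs.isBounded).closure

theorem closure_convexHull_union_subset_cthickening {K L : Set E} (hKcv : Convex ℝ K)
    (hKne : K.Nonempty) (hKb : IsBounded K) (hLne : L.Nonempty) (hLb : IsBounded L) :
    closure (convexHull ℝ (K ∪ L)) ⊆ cthickening (hausdorffDist K L) K := by
  refine closure_minimal (convexHull_min (Set.union_subset (self_subset_cthickening K) ?_)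
    (hKcv.cthickening _)) isClosed_cthickening
  intro x hx
  rw [mem_cthickening_iff, hausdorffDist_comm, hausdorffDist,
    ENNReal.ofReal_toReal (hausdorffEDist_ne_top_of_nonempty_of_bounded hLne hKne hLb hKb)]
  exact infEDist_le_hausdorffEDist_of_mem hx

theorem Convex.add_closedBall_subset {A : Set E} (hA : Convex ℝ A) {a : E} {ε δ : ℝ}
    (hε : 0 < ε) (hδ : 0 ≤ δ) (hball : closedBall a ε ⊆ A) :
    A + closedBall 0 δ ⊆ -((δ / ε) • a) +ᵥ (1 + δ / ε) • A := by
  set t := δ / ε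
  have ht : 0 ≤ t := div_nonneg hδ hε.le
  have hδt : closedBall (0 : E) δ = t • closedBall 0 ε := by
    rw [smul_closedBall _ _ hε.le, smul_zero, Real.norm_of_nonneg ht, div_mul_cancel₀ _ hε.ne']
  rw [hδt, hA.add_smul zero_le_one ht, one_smul]
  rintro _ ⟨b, hb, _, ⟨w, hw, rfl⟩, rfl⟩
  refine ⟨b + t • (a + w), Set.add_mem_add hb (Set.smul_mem_smul_set (hball ?_)), ?_⟩
  · rwa [mem_closedBall, dist_self_add_left, ← mem_closedBall_zero_iff]
  · show -(t • a) + (b + t • (a + w)) = b + t • w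
    rw [smul_add]
    abel

theorem addHaar_add_closedBall_le [MeasurableSpace E] [BorelSpace E] [FiniteDimensional ℝ E]
    (μ : Measure E) [μ.IsAddHaarMeasure] {A : Set E} (hA : Convex ℝ A) {a : E} {ε δ : ℝ}
    (hε : 0 < ε) (hδ : 0 ≤ δ) (hball : closedBall a ε ⊆ A) :
    μ (A + closedBall 0 δ) ≤ ENNReal.ofReal ((1 + δ / ε) ^ finrank ℝ E) * μ A := by
  calc μ (A + closedBall 0 δ) ≤ μ (-((δ / ε) • a) +ᵥ (1 + δ / ε) • A) :=
        measure_mono (hA.add_closedBall_subset hε hδ hball)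
    _ = _ := by rw [measure_vadd, Measure.addHaar_smul_of_nonneg μ (by positivity)]

theorem addHaar_add_closure_convexHull_le [MeasurableSpace E] [BorelSpace E]
    [FiniteDimensional ℝ E] (μ : Measure E) [μ.IsAddHaarMeasure] {G K L : Set E}
    (hGcv : Convex ℝ G) {x : E} {ε : ℝ} (hε : 0 < ε) (hball : closedBall x ε ⊆ G)
    (hKcv : Convex ℝ K) (hKcp : IsCompact K) (hKne : K.Nonempty)
    (hLne : L.Nonempty) (hLb : IsBounded L) :
    μ (G + closure (convexHull ℝ (K ∪ L))) ≤
      ENNReal.ofReal ((1 + hausdorffDist K L / ε) ^ finrank ℝ E) * μ (G + K) := by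
  obtain ⟨k, hk⟩ := hKne
  calc μ (G + closure (convexHull ℝ (K ∪ L)))
      ≤ μ (G + K + closedBall 0 (hausdorffDist K L)) := by
        rw [add_assoc, hKcp.add_closedBall_zero hausdorffDist_nonneg]
        exact measure_mono (Set.add_subset_add_left
          (closure_convexHull_union_subset_cthickening hKcv ⟨k, hk⟩ hKcp.isBounded hLne hLb))
    _ ≤ _ := addHaar_add_closedBall_le μ (hGcv.add hKcv) hε hausdorffDist_nonneg
        (closedBall_add_subset_add hball hk)

end ParallelBody

theorem one_add_pow_sub_one_le {t T : ℝ} (ht : 0 ≤ t) (htT : t ≤ T) (n : ℕ) :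
    (1 + t) ^ n - 1 ≤ n * (1 + T) ^ n * t := by
  have hsum : ∑ i ∈ Finset.range n, (t + 1) ^ i ≤ n * (1 + T) ^ n := by
    calc ∑ i ∈ Finset.range n, (t + 1) ^ i ≤ ∑ _i ∈ Finset.range n, (1 + T) ^ n := by
          refine Finset.sum_le_sum fun i hi => ?_
          calc (t + 1) ^ i ≤ (1 + T) ^ i := pow_le_pow_left₀ (by linarith) (by linarith) i
            _ ≤ (1 + T) ^ n := pow_le_pow_right₀ (by linarith)
                (Finset.mem_range.1 hi).le
      _ = n * (1 + T) ^ n := by simp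
  rw [add_comm 1 t, ← geom_sum_mul_add t n]
  linarith [mul_le_mul_of_nonneg_right hsum ht]

section UpperBound

variable {n : ℕ} {G K L : Set (EuclideanSpace ℝ (Fin n))}

theorem toReal_volume_add_closure_convexHull_sub_le (hGcv : Convex ℝ G) (hGcp : IsCompact G)
    {x : EuclideanSpace ℝ (Fin n)} {ε : ℝ} (hε : 0 < ε) (hball : closedBall x ε ⊆ G)
    (hKne : K.Nonempty) (hKcp : IsCompact K) (hKcv : Convex ℝ K) (hKG : K ⊆ G)
    (hLne : L.Nonempty) (hLG : L ⊆ G) :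
    (volume (G + closure (convexHull ℝ (K ∪ L)))).toReal - (volume (G + K)).toReal ≤
      n * (1 + diam G / ε) ^ n * (volume (G + G)).toReal / ε * hausdorffDist K L := by
  have ht : 0 ≤ hausdorffDist K L / ε := div_nonneg hausdorffDist_nonneg hε.le
  have hT : 0 ≤ diam G / ε := div_nonneg diam_nonneg hε.le
  have hVK : (volume (G + K)).toReal ≤ (volume (G + G)).toReal :=
    ENNReal.toReal_mono (hGcp.add hGcp).measure_lt_top.ne
      (measure_mono (Set.add_subset_add_left hKG))
  have hd : hausdorffDist K L ≤ diam G :=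
    (hausdorffDist_le_diam hKne hKcp.isBounded hLne (hGcp.isBounded.subset hLG)).trans
      (diam_mono (Set.union_subset hKG hLG) hGcp.isBounded)
  have hhull : (volume (G + closure (convexHull ℝ (K ∪ L)))).toReal ≤
      (1 + hausdorffDist K L / ε) ^ n * (volume (G + K)).toReal := by
    have h := addHaar_add_closure_convexHull_le volume hGcv hε hball hKcv hKcp hKne hLne
      (hGcp.isBounded.subset hLG)
    rw [finrank_euclideanSpace_fin] at h
    have h' := ENNReal.toReal_mono
      (ENNReal.mul_ne_top ENNReal.ofReal_ne_top (hGcp.add hKcp).measure_lt_top.ne) h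
    rwa [ENNReal.toReal_mul, ENNReal.toReal_ofReal (by positivity)] at h'
  have hd' : hausdorffDist K L / ε ≤ diam G / ε := div_le_div_of_nonneg_right hd hε.le
  have hpow := one_add_pow_sub_one_le ht hd' n
  calc (volume (G + closure (convexHull ℝ (K ∪ L)))).toReal - (volume (G + K)).toReal
      ≤ ((1 + hausdorffDist K L / ε) ^ n - 1) * (volume (G + K)).toReal := by linarith
    _ ≤ (n * (1 + diam G / ε) ^ n * (hausdorffDist K L / ε)) * (volume (G + G)).toReal :=
        mul_le_mul hpow hVK ENNReal.toReal_nonneg (by positivity)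
    _ = _ := by ring

theorem exists_rhoDist_le_mul_hausdorffDist (hGcv : Convex ℝ G) (hGcp : IsCompact G)
    (hGint : (interior G).Nonempty) :
    ∃ C, 0 ≤ C ∧ ∀ K L : Set (EuclideanSpace ℝ (Fin n)),
      K.Nonempty → IsCompact K → Convex ℝ K → K ⊆ G →
      L.Nonempty → IsCompact L → Convex ℝ L → L ⊆ G →
      rhoDist G K L ≤ C * hausdorffDist K L := by
  obtain ⟨x, hx⟩ := hGint
  obtain ⟨ε, hε, hball⟩ :=
    nhds_basis_closedBall.mem_iff.1 (mem_interior_iff_mem_nhds.1 hx)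
  have hdiam : 0 ≤ diam G / ε := div_nonneg diam_nonneg hε.le
  refine ⟨2 * (n * (1 + diam G / ε) ^ n * (volume (G + G)).toReal / ε), by positivity,
    fun K L hKne hKcp hKcv hKG hLne hLcp hLcv hLG => ?_⟩
  have hK := toReal_volume_add_closure_convexHull_sub_le hGcv hGcp hε hball
    hKne hKcp hKcv hKG hLne hLG
  have hL := toReal_volume_add_closure_convexHull_sub_le hGcv hGcp hε hball
    hLne hLcp hLcv hLG hKne hKG
  rw [Set.union_comm, hausdorffDist_comm] at hL
  rw [rhoDist]
  linarith

end UpperBound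

section Cap

variable {E : Type*} [NormedAddCommGroup E] [InnerProductSpace ℝ E]

def ballCap (u : E) (r h : ℝ) : Set E := {w | ‖w‖ ≤ r ∧ r - h < ⟪u, w⟫}

theorem measurableSet_ballCap [MeasurableSpace E] [OpensMeasurableSpace E] (u : E) (r h : ℝ) :
    MeasurableSet (ballCap u r h) :=
  show MeasurableSet ({w | ‖w‖ ≤ r} ∩ {w | r - h < ⟪u, w⟫}) from
    (isClosed_le continuous_norm continuous_const).measurableSet.inter
      (isOpen_lt continuous_const (continuous_const.inner continuous_id')).measurableSet

theorem volume_ballCap_eq_of_norm_eq [FiniteDimensional ℝ E] [MeasurableSpace E] [BorelSpace E]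
    {u v : E} (huv : ‖u‖ = ‖v‖) (r h : ℝ) :
    volume (ballCap u r h) = volume (ballCap v r h) := by
  set R := (ℝ ∙ (u - v))ᗮ.reflection
  have hRu : R u = v := Submodule.reflection_sub huv
  have hpre : ballCap u r h = R ⁻¹' ballCap v r h := by
    ext w
    simp only [ballCap, Set.mem_ofPred_eq, Set.mem_preimage, R.norm_map, ← hRu, R.inner_map_map]
  rw [hpre, R.measurePreserving.measure_preimage (measurableSet_ballCap v r h).nullMeasurableSet]

theorem IsMaxOn.mem_frontier_of_inner {G : Set E} {u g : E} (hu : u ≠ 0) (hg : g ∈ G)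
    (hmax : IsMaxOn (fun x => ⟪u, x⟫) G g) : g ∈ frontier G := by
  refine ⟨subset_closure hg, fun hint => hu ?_⟩
  have h := (hmax.isLocalMax (mem_interior_iff_mem_nhds.1 hint)).hasFDerivAt_eq_zero
    (innerSL ℝ u).hasFDerivAt
  simpa using congr($h u)

theorem IsCompact.exists_closedBall_subset_inner_le {G : Set E} (hGcp : IsCompact G)
    (hGne : G.Nonempty) {r : ℝ}
    (hroll : ∀ p ∈ frontier G, ∃ x, p ∈ closedBall x r ∧ closedBall x r ⊆ G)
    {u : E} (hu : ‖u‖ = 1) :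
    ∃ x, closedBall x r ⊆ G ∧ ∀ g ∈ G, ⟪u, g⟫ ≤ ⟪u, x⟫ + r := by
  obtain ⟨g₀, hg₀, hmax⟩ :=
    hGcp.exists_isMaxOn hGne (continuous_const.inner continuous_id' :
      Continuous fun x : E => ⟪u, x⟫).continuousOn
  obtain ⟨x, hg₀x, hxG⟩ :=
    hroll g₀ (hmax.mem_frontier_of_inner (by rintro rfl; simp at hu) hg₀)
  refine ⟨x, hxG, fun g hg => ?_⟩
  calc ⟪u, g⟫ ≤ ⟪u, g₀⟫ := hmax hg
    _ = ⟪u, x⟫ + ⟪u, g₀ - x⟫ := by rw [inner_sub_right]; ring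
    _ ≤ ⟪u, x⟫ + ‖u‖ * ‖g₀ - x‖ := by gcongr; exact real_inner_le_norm u _
    _ ≤ ⟪u, x⟫ + r := by rw [hu, one_mul, ← dist_eq_norm]; gcongr; exact hg₀x

theorem Convex.exists_inner_add_infDist_le {K : Set E} (hKcv : Convex ℝ K)
    (hKcp : IsCompact K) (hKne : K.Nonempty) {p : E} (hp : 0 < infDist p K) :
    ∃ u, ‖u‖ = 1 ∧ ∀ k ∈ K, ⟪u, k⟫ + infDist p K ≤ ⟪u, p⟫ := by
  obtain ⟨y, hyK, hy⟩ := hKcp.exists_infDist_eq_dist hKne p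
  rw [hy, dist_eq_norm] at hp ⊢
  have hobtuse : ∀ k ∈ K, ⟪p - y, k - y⟫ ≤ 0 := by
    refine (norm_eq_iInf_iff_real_inner_le_zero hKcv hyK).1 ?_
    rw [← dist_eq_norm, ← hy, infDist_eq_iInf]
    simp only [dist_eq_norm]
  refine ⟨‖p - y‖⁻¹ • (p - y),
    by rw [norm_smul, norm_inv, norm_norm, inv_mul_cancel₀ hp.ne'], fun k hk => ?_⟩
  have hsplit : ⟪p - y, p⟫ = ⟪p - y, k⟫ + ‖p - y‖ ^ 2 - ⟪p - y, k - y⟫ := by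
    rw [← real_inner_self_eq_norm_sq, inner_sub_right, inner_sub_right]
    ring
  have hsq : ‖p - y‖⁻¹ * ‖p - y‖ ^ 2 = ‖p - y‖ := by field_simp
  have hle : ‖p - y‖⁻¹ * ⟪p - y, k - y⟫ ≤ 0 :=
    mul_nonpos_of_nonneg_of_nonpos (by positivity) (hobtuse k hk)
  rw [real_inner_smul_left, real_inner_smul_left, hsplit, mul_sub, mul_add, hsq]
  linarith

theorem exists_vadd_ballCap_subset_diff {G K : Set E} (hGcp : IsCompact G) (hGne : G.Nonempty)
    {r : ℝ} (hroll : ∀ p ∈ frontier G, ∃ x, p ∈ closedBall x r ∧ closedBall x r ⊆ G)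
    (hKcv : Convex ℝ K) (hKcp : IsCompact K) (hKne : K.Nonempty) {p : E} {m : ℝ}
    (hm : 0 < m) (hmp : m ≤ infDist p K) :
    ∃ u x : E, ‖u‖ = 1 ∧ x +ᵥ ballCap u r m ⊆ (G + {p}) \ (G + K) := by
  obtain ⟨u, hu, hK⟩ := hKcv.exists_inner_add_infDist_le hKcp hKne (hm.trans_le hmp)
  obtain ⟨x, hxG, hG⟩ := hGcp.exists_closedBall_subset_inner_le hGne hroll hu
  refine ⟨u, x + p, hu, ?_⟩
  rintro _ ⟨w, ⟨hwr, hwu⟩, rfl⟩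
  constructor
  · refine ⟨x + w, hxG ?_, p, rfl, ?_⟩
    · rwa [mem_closedBall, dist_self_add_left]
    · change x + w + p = x + p + w
      abel
  · rintro ⟨g, hg, k, hk, hgk⟩
    have hlt : ⟪u, g + k⟫ < ⟪u, x + p + w⟫ := by
      rw [inner_add_right, inner_add_right, inner_add_right]
      linarith [hG g hg, hK k hk]
    change g + k = x + p + w at hgk
    exact hlt.ne (congrArg _ hgk)

theorem exists_measure_ballCap_add_le [MeasurableSpace E] [BorelSpace E] (μ : Measure E)
    [μ.IsAddLeftInvariant] {G K L : Set E} (hGcp : IsCompact G) (hGne : G.Nonempty) {r : ℝ}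
    (hroll : ∀ p ∈ frontier G, ∃ x, p ∈ closedBall x r ∧ closedBall x r ⊆ G)
    (hKcv : Convex ℝ K) (hKcp : IsCompact K) (hKne : K.Nonempty) {p : E} (hpL : p ∈ L)
    {m : ℝ} (hm : 0 < m) (hmp : m ≤ infDist p K) :
    ∃ u : E, ‖u‖ = 1 ∧
      μ (ballCap u r m) + μ (G + K) ≤ μ (G + closure (convexHull ℝ (K ∪ L))) := by
  obtain ⟨u, x, hu, hcap⟩ :=
    exists_vadd_ballCap_subset_diff hGcp hGne hroll hKcv hKcp hKne hm hmp
  have hsubP : G + {p} ⊆ G + closure (convexHull ℝ (K ∪ L)) :=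
    Set.add_subset_add_left <|
      Set.singleton_subset_iff.2 (subset_closure (subset_convexHull ℝ _ (Or.inr hpL)))
  have hsubK : G + K ⊆ G + closure (convexHull ℝ (K ∪ L)) :=
    Set.add_subset_add_left <| subset_closure.trans' fun k hk => subset_convexHull ℝ _ (Or.inl hk)
  refine ⟨u, hu, ?_⟩
  calc μ (ballCap u r m) + μ (G + K) = μ (x +ᵥ ballCap u r m) + μ (G + K) := by
        rw [measure_vadd]
    _ = μ ((x +ᵥ ballCap u r m) ∪ (G + K)) :=
        (measure_union (Set.disjoint_sdiff_left.mono_left hcap)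
          (hGcp.add hKcp).isClosed.measurableSet).symm
    _ ≤ _ := measure_mono (Set.union_subset ((hcap.trans Set.sdiff_subset).trans hsubP) hsubK)

end Cap

theorem preimage_pi_subset_ballCap_single {k : ℕ} {r m s : ℝ} (hr : 0 < r)
    (hmr : m ≤ r) (hs : 4 * (k + 1) * s ^ 2 ≤ r * m) :
    (MeasurableEquiv.toLp 2 (Fin (k + 1) → ℝ)).symm ⁻¹'
        Set.univ.pi (Fin.cons (Set.Ioc (r - m) (r - m / 2)) fun _ => Set.Ioc (-s) s) ⊆
      ballCap (EuclideanSpace.single 0 1) r m := by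
  intro v hv
  simp only [Set.mem_preimage, Set.mem_univ_pi] at hv
  have h0 : v 0 ∈ Set.Ioc (r - m) (r - m / 2) := hv 0
  have hsucc (i : Fin k) : v i.succ ∈ Set.Ioc (-s) s := hv i.succ
  refine ⟨?_, by simpa [EuclideanSpace.inner_single_left] using h0.1⟩
  have htail : ∑ i : Fin k, v i.succ ^ 2 ≤ k * s ^ 2 := by
    calc ∑ i : Fin k, v i.succ ^ 2 ≤ ∑ _i : Fin k, s ^ 2 :=
          Finset.sum_le_sum fun i _ => sq_le_sq' (hsucc i).1.le (hsucc i).2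
      _ = k * s ^ 2 := by simp
  -- `‖v‖² ≤ (r - m / 2)² + k s² ≤ (r - m / 2)² + r m / 4 ≤ r²`
  have hsq : ‖v‖ ^ 2 ≤ r ^ 2 := by
    rw [EuclideanSpace.norm_sq_eq, Fin.sum_univ_succ]
    simp only [Real.norm_eq_abs, sq_abs]
    nlinarith [h0.1, h0.2]
  exact pow_le_pow_iff_left₀ (norm_nonneg v) hr.le two_ne_zero |>.1 hsq

theorem ofReal_le_volume_ballCap_single {k : ℕ} {r m : ℝ} (hr : 0 < r) (hm : 0 < m)
    (hmr : m ≤ r) :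
    ENNReal.ofReal (m / 2 * √(r * m / (k + 1)) ^ k) ≤
      volume (ballCap (EuclideanSpace.single 0 1 : EuclideanSpace ℝ (Fin (k + 1))) r m) := by
  set s := √(r * m / (k + 1)) / 2
  have hs : 4 * (k + 1) * s ^ 2 = r * m := by
    rw [div_pow, Real.sq_sqrt (by positivity)]
    field_simp
    ring
  have hlen₀ : volume (Set.Ioc (r - m) (r - m / 2)) = ENNReal.ofReal (m / 2) := by
    rw [Real.volume_Ioc]; ring_nf
  have hlen : volume (Set.Ioc (-s) s) = ENNReal.ofReal (√(r * m / (k + 1))) := by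
    rw [Real.volume_Ioc, sub_neg_eq_add, add_halves]
  refine le_trans (le_of_eq ?_) (measure_mono (preimage_pi_subset_ballCap_single hr hmr hs.le))
  rw [(EuclideanSpace.volume_preserving_symm_measurableEquiv_toLp (Fin (k + 1))).measure_preimage
      (MeasurableSet.univ_pi
        (Fin.cases measurableSet_Ioc fun _ => measurableSet_Ioc)).nullMeasurableSet,
    volume_pi_pi, Fin.prod_univ_succ]
  simp only [Fin.cons_zero, Fin.cons_succ, hlen₀, hlen, Finset.prod_const, Finset.card_univ,
    Fintype.card_fin]
  rw [← ENNReal.ofReal_pow (by positivity), ← ENNReal.ofReal_mul (by positivity)]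

theorem ofReal_le_volume_ballCap {n : ℕ} (hn : 1 ≤ n) {u : EuclideanSpace ℝ (Fin n)}
    (hu : ‖u‖ = 1) {r m : ℝ} (hr : 0 < r) (hm : 0 < m) (hmr : m ≤ r) :
    ENNReal.ofReal (√(r / n) ^ (n - 1) / 2 * m ^ (((n : ℝ) + 1) / 2)) ≤
      volume (ballCap u r m) := by
  obtain ⟨k, rfl⟩ := Nat.exists_eq_add_of_le' hn
  have hsingle : ‖u‖ = ‖EuclideanSpace.single (0 : Fin (k + 1)) (1 : ℝ)‖ := by
    simp [hu]
  have hrpow : m ^ ((((k + 1 : ℕ) : ℝ) + 1) / 2) = √m ^ k * m := by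
    rw [Real.sqrt_eq_rpow, ← Real.rpow_mul_natCast hm.le, ← Real.rpow_add_one hm.ne']
    push_cast
    ring_nf
  rw [volume_ballCap_eq_of_norm_eq hsingle, hrpow]
  convert ofReal_le_volume_ballCap_single (k := k) hr hm hmr using 2
  rw [mul_div_right_comm r m, Real.sqrt_mul (by positivity), mul_pow]
  push_cast
  ring

theorem exists_hausdorffDist_le_infDist {α : Type*} [PseudoMetricSpace α] {K L : Set α}
    (hKcp : IsCompact K) (hKne : K.Nonempty) (hLcp : IsCompact L) (hLne : L.Nonempty) :
    (∃ p ∈ L, hausdorffDist K L ≤ infDist p K) ∨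
      ∃ p ∈ K, hausdorffDist K L ≤ infDist p L := by
  obtain ⟨p, hpK, hpmax⟩ := hKcp.exists_isMaxOn hKne (continuous_infDist_pt L).continuousOn
  obtain ⟨q, hqL, hqmax⟩ := hLcp.exists_isMaxOn hLne (continuous_infDist_pt K).continuousOn
  have hle : hausdorffDist K L ≤ max (infDist p L) (infDist q K) :=
    hausdorffDist_le_of_infDist (le_max_of_le_left infDist_nonneg)
      (fun x hx => le_max_of_le_left (hpmax hx)) (fun x hx => le_max_of_le_right (hqmax hx))
  rcases le_max_iff.1 hle with h | h
  · exact Or.inr ⟨p, hpK, h⟩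
  · exact Or.inl ⟨q, hqL, h⟩

section LowerBound

variable {n : ℕ} {G K L : Set (EuclideanSpace ℝ (Fin n))}

theorem rhoDist_comm : rhoDist G K L = rhoDist G L K := by
  simp only [rhoDist, Set.union_comm K L]
  ring

theorem toReal_volume_add_closure_convexHull_sub_le_rhoDist (hGcp : IsCompact G)
    (hKcp : IsCompact K) (hLcp : IsCompact L) :
    (volume (G + closure (convexHull ℝ (K ∪ L)))).toReal - (volume (G + K)).toReal ≤
      rhoDist G K L := by
  have hL : (volume (G + L)).toReal ≤ (volume (G + closure (convexHull ℝ (K ∪ L)))).toReal :=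
    ENNReal.toReal_mono (hGcp.add (hKcp.union hLcp).closure_convexHull).measure_lt_top.ne <|
      measure_mono <|
      Set.add_subset_add_left <|
        subset_closure.trans' fun x hx => subset_convexHull ℝ _ (Or.inr hx)
  rw [rhoDist]
  linarith

theorem rhoDist_nonneg (hGcp : IsCompact G) (hKcp : IsCompact K) (hLcp : IsCompact L) :
    0 ≤ rhoDist G K L := by
  have hK := toReal_volume_add_closure_convexHull_sub_le_rhoDist hGcp hKcp hLcp
  have hL := toReal_volume_add_closure_convexHull_sub_le_rhoDist hGcp hLcp hKcp
  rw [Set.union_comm, ← rhoDist_comm] at hL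
  rw [rhoDist] at hK hL ⊢
  linarith

theorem mul_rpow_le_toReal_volume_add_closure_convexHull_sub (hn : 1 ≤ n)
    (hGcp : IsCompact G) (hGne : G.Nonempty) {r : ℝ} (hr : 0 < r)
    (hroll : ∀ p ∈ frontier G, ∃ x, p ∈ closedBall x r ∧ closedBall x r ⊆ G)
    (hKne : K.Nonempty) (hKcp : IsCompact K) (hKcv : Convex ℝ K) (hLcp : IsCompact L)
    {p : EuclideanSpace ℝ (Fin n)} (hpL : p ∈ L) {m : ℝ} (hm : 0 < m) (hmr : m ≤ r)
    (hmp : m ≤ infDist p K) :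
    √(r / n) ^ (n - 1) / 2 * m ^ (((n : ℝ) + 1) / 2) ≤
      (volume (G + closure (convexHull ℝ (K ∪ L)))).toReal - (volume (G + K)).toReal := by
  obtain ⟨u, hu, hcap⟩ :=
    exists_measure_ballCap_add_le volume hGcp hGne hroll hKcv hKcp hKne hpL hm hmp
  have hvol := ENNReal.toReal_mono
    (hGcp.add (hKcp.union hLcp).closure_convexHull).measure_lt_top.ne
    ((add_le_add (ofReal_le_volume_ballCap hn hu hr hm hmr) le_rfl).trans hcap)
  rw [ENNReal.toReal_add ENNReal.ofReal_ne_top (hGcp.add hKcp).measure_lt_top.ne,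
    ENNReal.toReal_ofReal (by positivity)] at hvol
  linarith

theorem mul_rpow_le_rhoDist_of_le_infDist (hn : 1 ≤ n) (hGcp : IsCompact G) (hGne : G.Nonempty)
    {r : ℝ} (hr : 0 < r)
    (hroll : ∀ p ∈ frontier G, ∃ x, p ∈ closedBall x r ∧ closedBall x r ⊆ G)
    (hKne : K.Nonempty) (hKcp : IsCompact K) (hKcv : Convex ℝ K) (hKG : K ⊆ G)
    (hLcp : IsCompact L) (hLG : L ⊆ G) {p : EuclideanSpace ℝ (Fin n)} (hpL : p ∈ L)
    (hd : 0 < hausdorffDist K L) (hdp : hausdorffDist K L ≤ infDist p K) :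
    √(r / n) ^ (n - 1) / 2 * (r / (diam G + r)) ^ (((n : ℝ) + 1) / 2) *
      hausdorffDist K L ^ (((n : ℝ) + 1) / 2) ≤ rhoDist G K L := by
  set d := hausdorffDist K L
  set D := diam G + r
  have hD : 0 < D := add_pos_of_nonneg_of_pos diam_nonneg hr
  have hdD : d ≤ D :=
    ((hausdorffDist_le_diam hKne hKcp.isBounded ⟨p, hpL⟩ hLcp.isBounded).trans
      (diam_mono (Set.union_subset hKG hLG) hGcp.isBounded)).trans (le_add_of_nonneg_right hr.le)
  have hdm : r / D * d ≤ min d r := le_min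
    (mul_le_of_le_one_left hd.le ((div_le_one hD).2 (le_add_of_nonneg_left diam_nonneg)))
    (by calc r / D * d ≤ r / D * D := by gcongr
          _ = r := div_mul_cancel₀ r hD.ne')
  calc √(r / n) ^ (n - 1) / 2 * (r / D) ^ (((n : ℝ) + 1) / 2) * d ^ (((n : ℝ) + 1) / 2)
      = √(r / n) ^ (n - 1) / 2 * (r / D * d) ^ (((n : ℝ) + 1) / 2) := by
        rw [Real.mul_rpow (by positivity) hd.le, mul_assoc]
    _ ≤ √(r / n) ^ (n - 1) / 2 * min d r ^ (((n : ℝ) + 1) / 2) := by gcongr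
    _ ≤ (volume (G + closure (convexHull ℝ (K ∪ L)))).toReal - (volume (G + K)).toReal :=
        mul_rpow_le_toReal_volume_add_closure_convexHull_sub hn hGcp hGne hr hroll hKne hKcp
          hKcv hLcp hpL (lt_min hd hr) (min_le_right d r) ((min_le_left d r).trans hdp)
    _ ≤ rhoDist G K L := toReal_volume_add_closure_convexHull_sub_le_rhoDist hGcp hKcp hLcp

theorem exists_mul_rpow_hausdorffDist_le_rhoDist (hn : 1 ≤ n) (hGcp : IsCompact G)
    (hGne : G.Nonempty) {r : ℝ} (hr : 0 < r)
    (hroll : ∀ p ∈ frontier G, ∃ x, p ∈ closedBall x r ∧ closedBall x r ⊆ G) :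
    ∃ c, 0 < c ∧ ∀ K L : Set (EuclideanSpace ℝ (Fin n)),
      K.Nonempty → IsCompact K → Convex ℝ K → K ⊆ G →
      L.Nonempty → IsCompact L → Convex ℝ L → L ⊆ G →
      c * hausdorffDist K L ^ (((n : ℝ) + 1) / 2) ≤ rhoDist G K L := by
  have hD : 0 < diam G + r := add_pos_of_nonneg_of_pos diam_nonneg hr
  refine ⟨√(r / n) ^ (n - 1) / 2 * (r / (diam G + r)) ^ (((n : ℝ) + 1) / 2), ?_,
    fun K L hKne hKcp hKcv hKG hLne hLcp hLcv hLG => ?_⟩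
  · have : 0 < √(r / n) := Real.sqrt_pos.2 (div_pos hr (by exact_mod_cast hn))
    positivity
  rcases (hausdorffDist_nonneg : 0 ≤ hausdorffDist K L).eq_or_lt with hd | hd
  · rw [← hd, Real.zero_rpow (by positivity), mul_zero]
    exact rhoDist_nonneg hGcp hKcp hLcp
  rcases exists_hausdorffDist_le_infDist hKcp hKne hLcp hLne with
    ⟨p, hpL, hp⟩ | ⟨p, hpK, hp⟩
  · exact mul_rpow_le_rhoDist_of_le_infDist hn hGcp hGne hr hroll hKne hKcp hKcv hKG hLcp hLG
      hpL hd hp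
  · rw [hausdorffDist_comm] at hd hp ⊢
    rw [rhoDist_comm]
    exact mul_rpow_le_rhoDist_of_le_infDist hn hGcp hGne hr hroll hLne hLcp hLcv hLG hKcp hKG
      hpK hd hp

end LowerBound

theorem stmt1 {n : ℕ} (hn : 1 ≤ n) (G : Set (EuclideanSpace ℝ (Fin n)))
    (hGcv : Convex ℝ G) (hGcp : IsCompact G) (hGint : (interior G).Nonempty)
    (r : ℝ) (hr : 0 < r)
    (hroll : ∀ p ∈ frontier G, ∃ x : EuclideanSpace ℝ (Fin n),
      p ∈ closedBall x r ∧ closedBall x r ⊆ G) :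
    ∃ C : ℝ, 1 < C ∧ ∀ K L : Set (EuclideanSpace ℝ (Fin n)),
      K.Nonempty → IsCompact K → Convex ℝ K → K ⊆ G →
      L.Nonempty → IsCompact L → Convex ℝ L → L ⊆ G →
      (1 / C) * hausdorffDist K L ^ (((n : ℝ) + 1) / 2) ≤ rhoDist G K L ∧
        rhoDist G K L ≤ C * hausdorffDist K L := by
  obtain ⟨C, hC, hupper⟩ := exists_rhoDist_le_mul_hausdorffDist hGcv hGcp hGint
  obtain ⟨c, hc, hlower⟩ :=
    exists_mul_rpow_hausdorffDist_le_rhoDist hn hGcp (hGint.mono interior_subset) hr hroll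
  have hc' : 0 < c⁻¹ := inv_pos.2 hc
  refine ⟨C + c⁻¹ + 1, by linarith,
    fun K L hKne hKcp hKcv hKG hLne hLcp hLcv hLG => ⟨?_, ?_⟩⟩
  · calc 1 / (C + c⁻¹ + 1) * hausdorffDist K L ^ (((n : ℝ) + 1) / 2)
        ≤ c * hausdorffDist K L ^ (((n : ℝ) + 1) / 2) := by
          gcongr
          · exact Real.rpow_nonneg hausdorffDist_nonneg _
          · rw [one_div_le (by positivity) hc, one_div]
            linarith
      _ ≤ rhoDist G K L := hlower K L hKne hKcp hKcv hKG hLne hLcp hLcv hLG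
  · calc rhoDist G K L
        ≤ C * hausdorffDist K L := hupper K L hKne hKcp hKcv hKG hLne hLcp hLcv hLG
      _ ≤ (C + c⁻¹ + 1) * hausdorffDist K L := by
          gcongr
          · exact hausdorffDist_nonneg
          · linarith
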